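/- arXiv:2209.07432 — 3 statements merged into one kernel-verified Lean document; each statement's English description precedes it below -/
import Mathlib

section
/- (Auxiliary function bound for expectations.) Let f : ℝ × ℝⁿ → ℝⁿ, T > 0, X₀ ⊆ X ⊆ ℝⁿ, and suppose for each x₀ ∈ X₀ the solution x(·; x₀) of x' = f(t,x), x(0) = x₀ exists on [0,T], is differentiable, and remains in X. Suppose v ∈ C¹([0,T] × X), α ∈ ℝ, β ∈ ℝᵐ₊ satisfy: (i) ∂ₜv + f·∇ₓv ≤ 0 on [0,T] × X; (ii) g(x) ≤ v(T,x) for all x ∈ X; (iii) v(0,x) ≤ α + β ⬝ h(x) for all x ∈ X₀. Then for every probability measure μ₀ on X₀ with ∫ h dμ₀ ≤ c (componentwise) and with x₀ ↦ g(x(T;x₀)) integrable, one has ∫ g(x(T;x₀)) dμ₀(x₀) ≤ α + β ⬝ c. -/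
open Set MeasureTheory

/-!
Along every trajectory the auxiliary function `t ↦ v(t, x(t; x₀))` has derivative
`∂ₜv + f·∇ₓv ≤ 0`, so it is antitone on `[0,T]`; hence
`g(x(T; x₀)) ≤ v(T, x(T; x₀)) ≤ v(0, x₀) ≤ α + β ⬝ h(x₀)` for `μ₀`-almost every `x₀`.
Integrating and using `β ≥ 0` with the moment bounds `∫ h dμ₀ ≤ c` gives the claim.
-/

theorem antitoneOn_comp_of_fderiv_apply_nonpos {E : Type*} [NormedAddCommGroup E]
    [NormedSpace ℝ E] {v : ℝ × E → ℝ} (hv : Differentiable ℝ v) {γ γ' : ℝ → E} {a b : ℝ}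
    (hγ : ∀ t ∈ Icc a b, HasDerivAt γ (γ' t) t)
    (hLv : ∀ t ∈ Ioo a b, fderiv ℝ v (t, γ t) (1, γ' t) ≤ 0) :
    AntitoneOn (fun t => v (t, γ t)) (Icc a b) := by
  have hderiv : ∀ t ∈ Icc a b,
      HasDerivAt (fun s => v (s, γ s)) (fderiv ℝ v (t, γ t) (1, γ' t)) t := fun t ht =>
    (hv _).hasFDerivAt.comp_hasDerivAt t ((hasDerivAt_id t).prodMk (hγ t ht))
  apply antitoneOn_of_deriv_nonpos (convex_Icc a b)
  · exact fun t ht => (hderiv t ht).continuousAt.continuousWithinAt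
  · rw [interior_Icc]
    exact fun t ht => (hderiv t (Ioo_subset_Icc_self ht)).differentiableAt.differentiableWithinAt
  · rw [interior_Icc]
    intro t ht
    rw [(hderiv t (Ioo_subset_Icc_self ht)).deriv]
    exact hLv t ht

theorem integral_le_const_add_sum_mul_of_ae_le {Ω ι : Type*} [MeasurableSpace Ω] [Fintype ι]
    {μ : Measure Ω} [IsProbabilityMeasure μ] {F : Ω → ℝ} {h : Ω → ι → ℝ} {α : ℝ}
    {β c : ι → ℝ} (hβ : ∀ i, 0 ≤ β i) (hF : Integrable F μ)
    (hh : ∀ i, Integrable (fun x => h x i) μ) (hmom : ∀ i, ∫ x, h x i ∂μ ≤ c i)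
    (hle : ∀ᵐ x ∂μ, F x ≤ α + ∑ i, β i * h x i) :
    ∫ x, F x ∂μ ≤ α + ∑ i, β i * c i := by
  have hsum : Integrable (fun x => ∑ i, β i * h x i) μ :=
    integrable_finsetSum _ fun i _ => (hh i).const_mul (β i)
  calc ∫ x, F x ∂μ ≤ ∫ x, (α + ∑ i, β i * h x i) ∂μ :=
        integral_mono_ae hF ((integrable_const α).add hsum) hle
    _ = α + ∑ i, β i * ∫ x, h x i ∂μ := by
        rw [integral_add (integrable_const α) hsum, integral_const, probReal_univ, one_smul,
          integral_finsetSum _ fun i _ => (hh i).const_mul (β i)]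
        simp only [integral_const_mul]
    _ ≤ α + ∑ i, β i * c i := by
        gcongr with i
        exacts [hβ i, hmom i]

theorem stmt2_general (n m : ℕ) (f : ℝ → (Fin n → ℝ) → Fin n → ℝ) (T : ℝ) (hT : 0 < T)
    (X₀ X : Set (Fin n → ℝ))
    (Φ : ℝ → (Fin n → ℝ) → Fin n → ℝ)
    (hΦ0 : ∀ x₀ ∈ X₀, Φ 0 x₀ = x₀)
    (hΦode : ∀ x₀ ∈ X₀, ∀ t ∈ Icc (0:ℝ) T,
      HasDerivAt (fun s => Φ s x₀) (f t (Φ t x₀)) t)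
    (hΦX : ∀ x₀ ∈ X₀, ∀ t ∈ Icc (0:ℝ) T, Φ t x₀ ∈ X)
    (v : ℝ × (Fin n → ℝ) → ℝ) (hv : ContDiff ℝ 1 v)
    (g : (Fin n → ℝ) → ℝ) (h : (Fin n → ℝ) → Fin m → ℝ) (c : Fin m → ℝ)
    (α : ℝ) (β : Fin m → ℝ) (hβ : ∀ i, 0 ≤ β i)
    (hLv : ∀ t ∈ Icc (0:ℝ) T, ∀ y ∈ X, fderiv ℝ v (t, y) (1, f t y) ≤ 0)
    (hterm : ∀ x ∈ X, g x ≤ v (T, x))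
    (hinit : ∀ x ∈ X₀, v (0, x) ≤ α + ∑ i, β i * h x i)
    (μ₀ : Measure (Fin n → ℝ)) [IsProbabilityMeasure μ₀] (hsupp : μ₀ X₀ᶜ = 0)
    (hint_h : ∀ i, Integrable (fun x => h x i) μ₀)
    (hmom : ∀ i, ∫ x, h x i ∂μ₀ ≤ c i)
    (hint_g : Integrable (fun x₀ => g (Φ T x₀)) μ₀) :
    ∫ x₀, g (Φ T x₀) ∂μ₀ ≤ α + ∑ i, β i * c i := by
  have hbound : ∀ x₀ ∈ X₀, g (Φ T x₀) ≤ α + ∑ i, β i * h x₀ i := by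
    intro x₀ hx₀
    have hanti := antitoneOn_comp_of_fderiv_apply_nonpos (hv.differentiable one_ne_zero)
      (hΦode x₀ hx₀) fun t ht =>
        hLv t (Ioo_subset_Icc_self ht) _ (hΦX x₀ hx₀ t (Ioo_subset_Icc_self ht))
    have hdecay : v (T, Φ T x₀) ≤ v (0, x₀) := by
      simpa only [hΦ0 x₀ hx₀] using hanti (left_mem_Icc.2 hT.le) (right_mem_Icc.2 hT.le) hT.le
    calc g (Φ T x₀) ≤ v (T, Φ T x₀) := hterm _ (hΦX x₀ hx₀ T (right_mem_Icc.2 hT.le))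
      _ ≤ v (0, x₀) := hdecay
      _ ≤ α + ∑ i, β i * h x₀ i := hinit x₀ hx₀
  have hae : ∀ᵐ x₀ ∂μ₀, x₀ ∈ X₀ := ae_iff.2 hsupp
  exact integral_le_const_add_sum_mul_of_ae_le hβ hint_g hint_h hmom (hae.mono hbound)

/-- Auxiliary function bound for expectations. If `v` is C¹ with
nonpositive Lie derivative on `[0,T] × X`, `g ≤ v(T,·)` on `X`, and
`v(0,·) ≤ α + β ⬝ h` on `X₀` with `β ≥ 0`, then for every probability measure `μ₀`
supported on `X₀` with `∫ h dμ₀ ≤ c` componentwise, the expected terminal observable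
satisfies `∫ g(x(T;x₀)) dμ₀ ≤ α + β ⬝ c`. -/
theorem stmt2 (n m : ℕ) (f : ℝ → (Fin n → ℝ) → Fin n → ℝ) (T : ℝ) (hT : 0 < T)
    (X₀ X : Set (Fin n → ℝ)) (hXX : X₀ ⊆ X)
    (Φ : ℝ → (Fin n → ℝ) → Fin n → ℝ)
    (hΦ0 : ∀ x₀ ∈ X₀, Φ 0 x₀ = x₀)
    (hΦode : ∀ x₀ ∈ X₀, ∀ t ∈ Icc (0:ℝ) T,
      HasDerivAt (fun s => Φ s x₀) (f t (Φ t x₀)) t)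
    (hΦX : ∀ x₀ ∈ X₀, ∀ t ∈ Icc (0:ℝ) T, Φ t x₀ ∈ X)
    (v : ℝ × (Fin n → ℝ) → ℝ) (hv : ContDiff ℝ 1 v)
    (g : (Fin n → ℝ) → ℝ) (h : (Fin n → ℝ) → Fin m → ℝ) (c : Fin m → ℝ)
    (α : ℝ) (β : Fin m → ℝ) (hβ : ∀ i, 0 ≤ β i)
    (hLv : ∀ t ∈ Icc (0:ℝ) T, ∀ y ∈ X, fderiv ℝ v (t, y) (1, f t y) ≤ 0)
    (hterm : ∀ x ∈ X, g x ≤ v (T, x))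
    (hinit : ∀ x ∈ X₀, v (0, x) ≤ α + ∑ i, β i * h x i)
    (μ₀ : Measure (Fin n → ℝ)) [IsProbabilityMeasure μ₀] (hsupp : μ₀ X₀ᶜ = 0)
    (hint_h : ∀ i, Integrable (fun x => h x i) μ₀)
    (hmom : ∀ i, ∫ x, h x i ∂μ₀ ≤ c i)
    (hint_g : Integrable (fun x₀ => g (Φ T x₀)) μ₀) :
    ∫ x₀, g (Φ T x₀) ∂μ₀ ≤ α + ∑ i, β i * c i :=
  stmt2_general n m f T hT X₀ X Φ hΦ0 hΦode hΦX v hv g h c α β hβ hLv hterm hinit μ₀ hsupp hint_h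
    hmom hint_g
end

section
/- (Pointwise pathwise bound.) Under the hypotheses of the auxiliary function conditions — v ∈ C¹ with ℒv ≤ 0 on [0,T] × X, g ≤ v(T,·) on X, and v(0,·) ≤ α + β ⬝ h on X₀ — for every x₀ ∈ X₀ the chain of inequalities g(x(T;x₀)) ≤ v(T, x(T;x₀)) ≤ v(0, x₀) ≤ α + β ⬝ h(x₀) holds. -/
open Set

theorem HasFDerivAt.hasDerivAt_comp_graph {E : Type*} [NormedAddCommGroup E] [NormedSpace ℝ E]
    {v : ℝ × E → ℝ} {v' : ℝ × E →L[ℝ] ℝ} {γ : ℝ → E} {γ' : E} {t : ℝ}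
    (hv : HasFDerivAt v v' (t, γ t)) (hγ : HasDerivAt γ γ' t) :
    HasDerivAt (fun s => v (s, γ s)) (v' (1, γ')) t :=
  hv.comp_hasDerivAt t ((hasDerivAt_id t).prodMk hγ)

theorem antitoneOn_comp_graph_of_fderiv_nonpos {E : Type*} [NormedAddCommGroup E]
    [NormedSpace ℝ E] {v : ℝ × E → ℝ} {γ γ' : ℝ → E} {D : Set ℝ} (hD : Convex ℝ D)
    (hv : ∀ t ∈ D, DifferentiableAt ℝ v (t, γ t)) (hγ : ∀ t ∈ D, HasDerivAt γ (γ' t) t)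
    (hLv : ∀ t ∈ D, fderiv ℝ v (t, γ t) (1, γ' t) ≤ 0) :
    AntitoneOn (fun t => v (t, γ t)) D := by
  have hderiv : ∀ t ∈ D,
      HasDerivAt (fun s => v (s, γ s)) (fderiv ℝ v (t, γ t) (1, γ' t)) t := fun t ht =>
    (hv t ht).hasFDerivAt.hasDerivAt_comp_graph (hγ t ht)
  exact antitoneOn_of_hasDerivWithinAt_nonpos hD
    (fun t ht => (hderiv t ht).continuousAt.continuousWithinAt)
    (fun t ht => (hderiv t (interior_subset ht)).hasDerivWithinAt)
    (fun t ht => hLv t (interior_subset ht))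

theorem stmt3_general (n m : ℕ) (f : ℝ → (Fin n → ℝ) → Fin n → ℝ) (T : ℝ) (hT : 0 < T)
    (X₀ X : Set (Fin n → ℝ))
    (Φ : ℝ → (Fin n → ℝ) → Fin n → ℝ)
    (hΦ0 : ∀ x₀ ∈ X₀, Φ 0 x₀ = x₀)
    (hΦode : ∀ x₀ ∈ X₀, ∀ t ∈ Icc (0:ℝ) T,
      HasDerivAt (fun s => Φ s x₀) (f t (Φ t x₀)) t)
    (hΦX : ∀ x₀ ∈ X₀, ∀ t ∈ Icc (0:ℝ) T, Φ t x₀ ∈ X)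
    (v : ℝ × (Fin n → ℝ) → ℝ) (hv : ContDiff ℝ 1 v)
    (g : (Fin n → ℝ) → ℝ) (h : (Fin n → ℝ) → Fin m → ℝ)
    (α : ℝ) (β : Fin m → ℝ)
    (hLv : ∀ t ∈ Icc (0:ℝ) T, ∀ y ∈ X, fderiv ℝ v (t, y) (1, f t y) ≤ 0)
    (hterm : ∀ x ∈ X, g x ≤ v (T, x))
    (hinit : ∀ x ∈ X₀, v (0, x) ≤ α + ∑ i, β i * h x i) :
    ∀ x₀ ∈ X₀,
      g (Φ T x₀) ≤ v (T, Φ T x₀) ∧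
      v (T, Φ T x₀) ≤ v (0, x₀) ∧
      v (0, x₀) ≤ α + ∑ i, β i * h x₀ i := by
  intro x₀ hx₀
  have hT₀ : T ∈ Icc 0 T := right_mem_Icc.2 hT.le
  have h0 : (0 : ℝ) ∈ Icc 0 T := left_mem_Icc.2 hT.le
  have hanti : AntitoneOn (fun t => v (t, Φ t x₀)) (Icc 0 T) :=
    antitoneOn_comp_graph_of_fderiv_nonpos (convex_Icc 0 T)
      (fun t _ => hv.differentiable one_ne_zero _) (hΦode x₀ hx₀)
      (fun t ht => hLv t ht _ (hΦX x₀ hx₀ t ht))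
  have hdecay : v (T, Φ T x₀) ≤ v (0, x₀) := by
    simpa only [hΦ0 x₀ hx₀] using hanti h0 hT₀ hT.le
  exact ⟨hterm _ (hΦX x₀ hx₀ T hT₀), hdecay, hinit x₀ hx₀⟩

/-- Pointwise pathwise bound. Under the auxiliary-function conditions,
for every `x₀ ∈ X₀` the chain of inequalities
`g(x(T;x₀)) ≤ v(T, x(T;x₀)) ≤ v(0, x₀) ≤ α + β ⬝ h(x₀)` holds. -/
theorem stmt3 (n m : ℕ) (f : ℝ → (Fin n → ℝ) → Fin n → ℝ) (T : ℝ) (hT : 0 < T)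
    (X₀ X : Set (Fin n → ℝ)) (hXX : X₀ ⊆ X)
    (Φ : ℝ → (Fin n → ℝ) → Fin n → ℝ)
    (hΦ0 : ∀ x₀ ∈ X₀, Φ 0 x₀ = x₀)
    (hΦode : ∀ x₀ ∈ X₀, ∀ t ∈ Icc (0:ℝ) T,
      HasDerivAt (fun s => Φ s x₀) (f t (Φ t x₀)) t)
    (hΦX : ∀ x₀ ∈ X₀, ∀ t ∈ Icc (0:ℝ) T, Φ t x₀ ∈ X)
    (v : ℝ × (Fin n → ℝ) → ℝ) (hv : ContDiff ℝ 1 v)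
    (g : (Fin n → ℝ) → ℝ) (h : (Fin n → ℝ) → Fin m → ℝ)
    (α : ℝ) (β : Fin m → ℝ) (hβ : ∀ i, 0 ≤ β i)
    (hLv : ∀ t ∈ Icc (0:ℝ) T, ∀ y ∈ X, fderiv ℝ v (t, y) (1, f t y) ≤ 0)
    (hterm : ∀ x ∈ X, g x ≤ v (T, x))
    (hinit : ∀ x ∈ X₀, v (0, x) ≤ α + ∑ i, β i * h x i) :
    ∀ x₀ ∈ X₀,
      g (Φ T x₀) ≤ v (T, Φ T x₀) ∧
      v (T, Φ T x₀) ≤ v (0, x₀) ∧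
      v (0, x₀) ≤ α + ∑ i, β i * h x₀ i :=
  stmt3_general n m f T hT X₀ X Φ hΦ0 hΦode hΦX v hv g h α β hLv hterm hinit
end

section
/- (Tightness of the Lagrangian reformulation.) Let p(β, v) := β ⬝ c + max_{x ∈ X₀}[v(0,x) − β ⬝ h(x)] + max_{x ∈ X}[g(x) − v(T,x)] + T · max_{(t,x) ∈ [0,T]×X} ℒv(t,x) for β ∈ ℝᵐ₊ and v ∈ C¹([0,T]×X), with X₀, X compact. Then inf over all (β, v) of p(β, v) equals inf over (β, v) satisfying additionally g ≤ v(T,·) on X and ℒv ≤ 0 on [0,T]×X of {β ⬝ c + max_{x ∈ X₀}[v(0,x) − β ⬝ h(x)]}. -/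
open Set

/-!
If `(β, v)` satisfies the constraints `g ≤ v(T,·)` and `ℒv ≤ 0`, its two penalty terms in
`p(β, v)` are nonpositive, so the unconstrained infimum is at most the constrained one.
Conversely, for arbitrary `(β, v)` put `A = max_X [g − v(T,·)]`, `B = max ℒv` and
`v'(t, x) = v(t, x) + A + (T − t) B`. Then `g ≤ v'(T,·)` and `ℒv' = ℒv − B ≤ 0`, while
`v'(0,·) = v(0,·) + A + T B`, so the constrained objective at `(β, v')` is exactly `p(β, v)`.
-/

theorem csSup_image_add_const {α β : Type*} [ConditionallyCompleteLattice β] [AddGroup β]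
    [AddRightMono β] {s : Set α} (φ : α → β) (c : β) (hne : s.Nonempty)
    (hbdd : BddAbove (φ '' s)) :
    sSup ((fun x => φ x + c) '' s) = sSup (φ '' s) + c := by
  calc sSup ((fun x => φ x + c) '' s) = sSup (OrderIso.addRight c '' (φ '' s)) := by
        rw [image_image]; rfl
    _ = sSup (φ '' s) + c := ((OrderIso.addRight c).map_csSup' (hne.image φ) hbdd).symm

section Lagrangian

variable {E : Type*} [NormedAddCommGroup E] [NormedSpace ℝ E]

/-- The transport operator `ℒv = ∂ₜv + f · ∇ₓv`. -/
noncomputable def transportDeriv (f : ℝ → E → E) (v : ℝ × E → ℝ) (q : ℝ × E) : ℝ :=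
  fderiv ℝ v q (1, f q.1 q.2)

noncomputable def constraintPenalty (f : ℝ → E → E) (T : ℝ) (X : Set E) (g : E → ℝ)
    (v : ℝ × E → ℝ) : ℝ :=
  sSup ((fun x => g x - v (T, x)) '' X) + T * sSup (transportDeriv f v '' Icc 0 T ×ˢ X)

theorem continuous_transportDeriv {f : ℝ → E → E} {v : ℝ × E → ℝ}
    (hf : Continuous fun q : ℝ × E => f q.1 q.2) (hv : ContDiff ℝ 1 v) :
    Continuous (transportDeriv f v) :=
  (hv.continuous_fderiv one_ne_zero).clm_apply (continuous_const.prodMk hf)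

theorem transportDeriv_add_const_sub_mul_fst (f : ℝ → E → E) {v : ℝ × E → ℝ}
    (hv : Differentiable ℝ v) (a b : ℝ) (q : ℝ × E) :
    transportDeriv f (fun p => v p + a - b * p.1) q = transportDeriv f v q - b := by
  have hshift : HasFDerivAt (fun p : ℝ × E => v p + a - b * p.1)
      (fderiv ℝ v q - b • ContinuousLinearMap.fst ℝ ℝ E) q :=
    ((hv q).hasFDerivAt.add_const a).sub (hasFDerivAt_fst.const_mul b)
  simp [transportDeriv, hshift.fderiv]

theorem constraintPenalty_nonpos {f : ℝ → E → E} {T : ℝ} {X : Set E} {g : E → ℝ}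
    {v : ℝ × E → ℝ} (hT : 0 ≤ T) (hgv : ∀ x ∈ X, g x ≤ v (T, x))
    (hLv : ∀ t ∈ Icc 0 T, ∀ y ∈ X, transportDeriv f v (t, y) ≤ 0) :
    constraintPenalty f T X g v ≤ 0 := by
  have hterminal : sSup ((fun x => g x - v (T, x)) '' X) ≤ 0 :=
    Real.sSup_nonpos <| forall_mem_image.2 fun x hx => sub_nonpos.2 (hgv x hx)
  have htransport : sSup (transportDeriv f v '' Icc 0 T ×ˢ X) ≤ 0 :=
    Real.sSup_nonpos <| forall_mem_image.2 fun q hq => hLv q.1 hq.1 q.2 hq.2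
  have := mul_nonpos_of_nonneg_of_nonpos hT htransport
  unfold constraintPenalty
  linarith

theorem exists_feasible_add_constraintPenalty {f : ℝ → E → E} (T : ℝ) {X : Set E}
    {g : E → ℝ} {v : ℝ × E → ℝ} (hf : Continuous fun q : ℝ × E => f q.1 q.2)
    (hXc : IsCompact X) (hg : Continuous g) (hv : ContDiff ℝ 1 v) :
    ∃ v' : ℝ × E → ℝ, ContDiff ℝ 1 v' ∧ (∀ x ∈ X, g x ≤ v' (T, x)) ∧
      (∀ t ∈ Icc 0 T, ∀ y ∈ X, transportDeriv f v' (t, y) ≤ 0) ∧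
      ∀ x, v' (0, x) = v (0, x) + constraintPenalty f T X g v := by
  set A := sSup ((fun x => g x - v (T, x)) '' X)
  set B := sSup (transportDeriv f v '' Icc 0 T ×ˢ X)
  have hA : ∀ x ∈ X, g x - v (T, x) ≤ A := fun x hx =>
    le_csSup ((hXc.image (hg.sub (hv.continuous.comp (Continuous.prodMk_right T)))).bddAbove)
      (mem_image_of_mem _ hx)
  have hB : ∀ q ∈ Icc 0 T ×ˢ X, transportDeriv f v q ≤ B := fun q hq =>
    le_csSup (((isCompact_Icc.prod hXc).image (continuous_transportDeriv hf hv)).bddAbove)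
      (mem_image_of_mem _ hq)
  refine ⟨fun p => v p + (A + T * B) - B * p.1,
    (hv.add contDiff_const).sub (contDiff_const.mul contDiff_fst), fun x hx => ?_,
    fun t ht y hy => ?_, fun x => by simp [constraintPenalty, A, B]⟩
  · have := hA x hx
    linarith
  · rw [transportDeriv_add_const_sub_mul_fst f (hv.differentiable one_ne_zero)]
    exact sub_nonpos.2 (hB (t, y) ⟨ht, hy⟩)

end Lagrangian

theorem stmt18_general (n m : ℕ) (f : ℝ → (Fin n → ℝ) → Fin n → ℝ)
    (hf : Continuous fun q : ℝ × (Fin n → ℝ) => f q.1 q.2)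
    (T : ℝ) (hT : 0 < T)
    (X₀ X : Set (Fin n → ℝ)) (hX₀c : IsCompact X₀) (hX₀ne : X₀.Nonempty)
    (hXc : IsCompact X)
    (g : (Fin n → ℝ) → ℝ) (hg : Continuous g)
    (h : (Fin n → ℝ) → Fin m → ℝ) (hh : ∀ i, Continuous fun x => h x i)
    (c : Fin m → ℝ) :
    sInf {r : EReal | ∃ (β : Fin m → ℝ) (v : ℝ × (Fin n → ℝ) → ℝ),
        (∀ i, 0 ≤ β i) ∧ ContDiff ℝ 1 v ∧
        r = (((∑ i, β i * c i)
          + sSup ((fun x => v (0, x) - ∑ i, β i * h x i) '' X₀)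
          + sSup ((fun x => g x - v (T, x)) '' X)
          + T * sSup ((fun q : ℝ × (Fin n → ℝ) =>
              fderiv ℝ v q (1, f q.1 q.2)) '' (Icc (0:ℝ) T ×ˢ X)) : ℝ) : EReal)} =
    sInf {r : EReal | ∃ (β : Fin m → ℝ) (v : ℝ × (Fin n → ℝ) → ℝ),
        (∀ i, 0 ≤ β i) ∧ ContDiff ℝ 1 v ∧
        (∀ x ∈ X, g x ≤ v (T, x)) ∧
        (∀ t ∈ Icc (0:ℝ) T, ∀ y ∈ X, fderiv ℝ v (t, y) (1, f t y) ≤ 0) ∧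
        r = (((∑ i, β i * c i)
          + sSup ((fun x => v (0, x) - ∑ i, β i * h x i) '' X₀) : ℝ) : EReal)} := by
  apply le_antisymm
  · refine le_sInf ?_
    rintro _ ⟨β, v, hβ, hv, hgv, hLv, rfl⟩
    refine sInf_le_of_le ⟨β, v, hβ, hv, rfl⟩ (EReal.coe_le_coe_iff.2 ?_)
    have := constraintPenalty_nonpos (f := f) (X := X) hT.le hgv hLv
    unfold constraintPenalty transportDeriv at this
    linarith
  · refine le_sInf ?_
    rintro _ ⟨β, v, hβ, hv, rfl⟩
    obtain ⟨v', hv', hgv', hLv', hv'0⟩ := exists_feasible_add_constraintPenalty T hf hXc hg hv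
    refine sInf_le_of_le ⟨β, v', hβ, hv', hgv', hLv', rfl⟩ (EReal.coe_le_coe_iff.2 (le_of_eq ?_))
    have hcont : Continuous fun x => v (0, x) - ∑ i, β i * h x i :=
      (hv.continuous.comp (Continuous.prodMk_right 0)).sub
        (continuous_finsetSum _ fun i _ => continuous_const.mul (hh i))
    have hshift := csSup_image_add_const _ (constraintPenalty f T X g v) hX₀ne
      (hX₀c.image hcont).bddAbove
    simp only [hv'0, add_sub_right_comm] at hshift ⊢
    rw [hshift]
    unfold constraintPenalty transportDeriv
    ring

/-- Tightness of the Lagrangian reformulation. With `X₀, X` compact and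
`p(β,v) = β⬝c + max_{X₀}[v(0,·) − β⬝h] + max_X[g − v(T,·)] + T·max_{[0,T]×X} ℒv`,
the infimum of `p(β,v)` over all `β ∈ ℝᵐ₊` and C¹ functions `v` equals the infimum of
`β⬝c + max_{X₀}[v(0,·) − β⬝h]` over those `(β,v)` that additionally satisfy
`g ≤ v(T,·)` on `X` and `ℒv ≤ 0` on `[0,T] × X` (infima taken in the extended reals,
maxima realized as suprema of images). -/
theorem stmt18 (n m : ℕ) (f : ℝ → (Fin n → ℝ) → Fin n → ℝ)
    (hf : Continuous fun q : ℝ × (Fin n → ℝ) => f q.1 q.2)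
    (T : ℝ) (hT : 0 < T)
    (X₀ X : Set (Fin n → ℝ)) (hX₀c : IsCompact X₀) (hX₀ne : X₀.Nonempty)
    (hXc : IsCompact X) (hXne : X.Nonempty)
    (g : (Fin n → ℝ) → ℝ) (hg : Continuous g)
    (h : (Fin n → ℝ) → Fin m → ℝ) (hh : ∀ i, Continuous fun x => h x i)
    (c : Fin m → ℝ) :
    sInf {r : EReal | ∃ (β : Fin m → ℝ) (v : ℝ × (Fin n → ℝ) → ℝ),
        (∀ i, 0 ≤ β i) ∧ ContDiff ℝ 1 v ∧
        r = (((∑ i, β i * c i)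
          + sSup ((fun x => v (0, x) - ∑ i, β i * h x i) '' X₀)
          + sSup ((fun x => g x - v (T, x)) '' X)
          + T * sSup ((fun q : ℝ × (Fin n → ℝ) =>
              fderiv ℝ v q (1, f q.1 q.2)) '' (Icc (0:ℝ) T ×ˢ X)) : ℝ) : EReal)} =
    sInf {r : EReal | ∃ (β : Fin m → ℝ) (v : ℝ × (Fin n → ℝ) → ℝ),
        (∀ i, 0 ≤ β i) ∧ ContDiff ℝ 1 v ∧
        (∀ x ∈ X, g x ≤ v (T, x)) ∧
        (∀ t ∈ Icc (0:ℝ) T, ∀ y ∈ X, fderiv ℝ v (t, y) (1, f t y) ≤ 0) ∧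
        r = (((∑ i, β i * c i)
          + sSup ((fun x => v (0, x) - ∑ i, β i * h x i) '' X₀) : ℝ) : EReal)} :=
  stmt18_general n m f hf T hT X₀ X hX₀c hX₀ne hXc g hg h hh c
end
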